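/- Let P be a joint probability distribution of a finite variable X with values in Fin m and a parameter variable Z with values in a finite set, and let t : Fin m → Fin n be a statistic. Then t is sufficient for Z (i.e. X is conditionally independent of Z given t(X)) if and only if there exist functions α : Fin n × val(Z) → ℝ≥0 and ν : Fin m → ℝ≥0 such that P(X = x, Z = z) = α(t(x), z) · ν(x) for all x and z. -/
import Mathlib


open Finset

/-- Discrete Fisher–Neyman factorization theorem: a statistic `t` is sufficient
for `Z` (i.e. `X` is conditionally independent of `Z` given `t X`) iff the joint
distribution factorizes as `α (t x, z) * ν x`. -/
theorem stmt_3 (m n : ℕ) {Z : Type*} [Fintype Z]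
    (P : Fin m × Z → ℝ) (hP0 : ∀ p, 0 ≤ P p) (hP1 : ∑ p, P p = 1)
    (t : Fin m → Fin n) :
    (∀ (x : Fin m) (z : Z),
        P (x, z) * (∑ x' ∈ Finset.univ.filter (fun x' => t x' = t x), ∑ z' : Z, P (x', z'))
          = (∑ z' : Z, P (x, z'))
            * (∑ x' ∈ Finset.univ.filter (fun x' => t x' = t x), P (x', z)))
    ↔ (∃ (α : Fin n × Z → ℝ) (ν : Fin m → ℝ),
        (∀ p, 0 ≤ α p) ∧ (∀ x, 0 ≤ ν x) ∧
        ∀ (x : Fin m) (z : Z), P (x, z) = α (t x, z) * ν x) := by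
  classical
  set ν : Fin m → ℝ := fun x => ∑ z' : Z, P (x, z') with hν
  have hν0 : ∀ x, 0 ≤ ν x := fun x => Finset.sum_nonneg fun z _ => hP0 _
  set S : Fin n → ℝ := fun y => ∑ x' ∈ Finset.univ.filter (fun x' => t x' = y), ν x' with hS
  have hS0 : ∀ y, 0 ≤ S y := fun y => Finset.sum_nonneg fun x _ => hν0 x
  set T : Fin n → Z → ℝ := fun y z => ∑ x' ∈ Finset.univ.filter (fun x' => t x' = y), P (x', z)
    with hT
  have hT0 : ∀ y z, 0 ≤ T y z := fun y z => Finset.sum_nonneg fun x _ => hP0 _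
  have hPν : ∀ x z, P (x, z) ≤ ν x := by
    intro x z
    exact Finset.single_le_sum (f := fun z' => P (x, z')) (fun z' _ => hP0 _) (Finset.mem_univ z)
  have hνS : ∀ x, ν x ≤ S (t x) := by
    intro x
    exact Finset.single_le_sum (fun x' _ => hν0 x')
      (Finset.mem_filter.mpr ⟨Finset.mem_univ x, rfl⟩)
  constructor
  · intro h
    refine ⟨fun p => if S p.1 = 0 then 0 else T p.1 p.2 / S p.1, ν, ?_, hν0, ?_⟩
    · intro p
      by_cases hs : S p.1 = 0
      · simp [hs]
      · simp only [hs, if_false]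
        exact div_nonneg (hT0 _ _) (hS0 _)
    · intro x z
      by_cases hs : S (t x) = 0
      · have hνx : ν x = 0 := le_antisymm (hs ▸ hνS x) (hν0 x)
        have : P (x, z) = 0 := le_antisymm (hνx ▸ hPν x z) (hP0 _)
        simp [this, hs, hνx]
      · have key := h x z
        simp only [hs, if_false]
        have : P (x, z) * S (t x) = ν x * T (t x) z := key
        field_simp
        linarith
  · rintro ⟨α, νf, hα0, hνf0, hfac⟩
    intro x z
    have h1 : (∑ x' ∈ Finset.univ.filter (fun x' => t x' = t x), ∑ z' : Z, P (x', z'))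
        = (∑ z' : Z, α (t x, z')) * ∑ x' ∈ Finset.univ.filter (fun x' => t x' = t x), νf x' := by
      rw [Finset.mul_sum]
      refine Finset.sum_congr rfl fun x' hx' => ?_
      have ht : t x' = t x := (Finset.mem_filter.mp hx').2
      rw [Finset.sum_mul]
      refine Finset.sum_congr rfl fun z' _ => ?_
      rw [hfac x' z', ht]
    have h2 : (∑ x' ∈ Finset.univ.filter (fun x' => t x' = t x), P (x', z))
        = α (t x, z) * ∑ x' ∈ Finset.univ.filter (fun x' => t x' = t x), νf x' := by
      rw [Finset.mul_sum]
      refine Finset.sum_congr rfl fun x' hx' => ?_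
      have ht : t x' = t x := (Finset.mem_filter.mp hx').2
      rw [hfac x' z, ht]
    have h3 : (∑ z' : Z, P (x, z')) = (∑ z' : Z, α (t x, z')) * νf x := by
      rw [Finset.sum_mul]
      exact Finset.sum_congr rfl fun z' _ => hfac x z'
    rw [h1, h2, h3, hfac x z]
    ring
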